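/- arXiv:2107.05461 — 4 statements merged into one kernel-verified Lean document; each statement's English description precedes it below -/
import Mathlib

section
/- Let v : ℝ → ℝ be 1-periodic and C¹ with |v′(θ)| ≤ D₀ for all θ (D₀ > 0), let α, θ*, E* ∈ ℝ, let 0 < ρ₀ ≤ 1/64 and 0 < ε ≤ ρ₀⁴. Let Λ ⊂ ℤ be a finite interval such that |v(θ* + mα) − E*| ≥ ρ₀ for all m ∈ Λ. Then for every θ with |θ − θ*| < ρ₀/(8D₀) and every E with |E − E*| < ρ₀/2, the matrix H^Λ(θ) − E is invertible and for all m, n ∈ Λ: |R^Λ_{θ,E}(m,n)| ≤ (8/ρ₀)(8ε/ρ₀)^{|m−n|}; in particular, for |m − n| ≥ 1, log|R^Λ_{θ,E}(m,n)| ≤ −(|log ε|/4)·|m − n|. -/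
/-- The Dirichlet restriction `H^Λ(θ)` of the quasi-periodic Schrödinger operator
`εΔ + v(θ + ·α)` to the integer interval `Λ = [a,b]`. -/
noncomputable def schrodingerMatrix (ε : ℝ) (v : ℝ → ℝ) (α θ : ℝ) (a b : ℤ) :
    Matrix ↥(Finset.Icc a b) ↥(Finset.Icc a b) ℝ :=
  Matrix.of fun m n =>
    if (m : ℤ) = (n : ℤ) then v (θ + ((m : ℤ) : ℝ) * α)
    else if ((m : ℤ) - (n : ℤ)).natAbs = 1 then ε else 0

/-!
The diagonal `d m = v (θ + m α) - E` stays at least `ρ₀ / 4` in absolute value on `Λ` (mean value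
theorem), while the hopping is `ε ≤ ρ₀ / 16`. A maximum principle for the row equations
`ε u (m - 1) + d m u m + ε u (m + 1) = f m` gives injectivity of `H^Λ(θ) - E` and the bound `8 / ρ₀`
on a column `u` of the Green's function; at a site `z ≠ n` the row equation is homogeneous, so
`|u z| ≤ (8 ε / ρ₀) max (|u (z - 1)|, |u (z + 1)|)` and induction on `|z - n|` gives the decay.

The logarithmic bound needs `u z ≠ 0`. Left of the pole `|u|` is nondecreasing (diagonal
dominance), so a zero there forces two consecutive zeros, which the recurrence carries to
`u (n - 1) = u n = 0`; by reflection also `u (n + 1) = 0`, contradicting the row equation at `n`.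
-/

def schrodingerOp (ε : ℝ) (d u : ℤ → ℝ) (m : ℤ) : ℝ :=
  ε * u (m - 1) + d m * u m + ε * u (m + 1)

/-- `u` is column `n` of the inverse of `εΔ + d` on `[a, b]` with Dirichlet boundary conditions,
extended by zero to `ℤ`. -/
structure IsGreenColumn (ε : ℝ) (d u : ℤ → ℝ) (a b n : ℤ) : Prop where
  eq_zero : ∀ z ∉ Finset.Icc a b, u z = 0
  schrodingerOp_eq : ∀ m ∈ Finset.Icc a b, schrodingerOp ε d u m = if m = n then 1 else 0

section

variable {ε δ : ℝ} {d u : ℤ → ℝ} {a b n : ℤ}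

lemma schrodingerOp_neg (ε : ℝ) (d u : ℤ → ℝ) (m : ℤ) :
    schrodingerOp ε (fun z => d (-z)) (fun z => u (-z)) m = schrodingerOp ε d u (-m) := by
  simp only [schrodingerOp]
  rw [show -(m - 1) = -m + 1 by ring, show -(m + 1) = -m - 1 by ring]
  ring

lemma mul_abs_le_abs_schrodingerOp_add (hε : 0 ≤ ε) {m : ℤ} (hd : δ ≤ |d m|) :
    δ * |u m| ≤ |schrodingerOp ε d u m| + ε * (|u (m - 1)| + |u (m + 1)|) := by
  have hdu : d m * u m = schrodingerOp ε d u m - ε * u (m - 1) - ε * u (m + 1) := by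
    unfold schrodingerOp; ring
  calc δ * |u m| ≤ |d m * u m| := by rw [abs_mul]; gcongr
    _ ≤ |schrodingerOp ε d u m| + |ε * u (m - 1)| + |ε * u (m + 1)| := by
      rw [hdu]; exact (abs_sub _ _).trans (add_le_add_left (abs_sub _ _) _)
    _ = _ := by rw [abs_mul, abs_mul, abs_of_nonneg hε]; ring

theorem abs_le_of_abs_schrodingerOp_le (hε : 0 < ε) (hεδ : 4 * ε ≤ δ)
    (hd : ∀ m ∈ Finset.Icc a b, δ ≤ |d m|) (hu : ∀ z ∉ Finset.Icc a b, u z = 0)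
    {c : ℝ} (hc : 0 ≤ c) (hHu : ∀ m ∈ Finset.Icc a b, |schrodingerOp ε d u m| ≤ c) (z : ℤ) :
    |u z| ≤ 2 * c / δ := by
  have hδ : 0 < δ := by linarith
  by_cases hz : z ∈ Finset.Icc a b
  swap
  · rw [hu z hz, abs_zero]; positivity
  obtain ⟨k, hk, hmax⟩ := Finset.exists_max_image _ (fun y => |u y|) ⟨z, hz⟩
  have hK : ∀ y, |u y| ≤ |u k| := fun y => by
    by_cases hy : y ∈ Finset.Icc a b
    · exact hmax y hy
    · rw [hu y hy, abs_zero]; exact abs_nonneg _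
  have hrow := mul_abs_le_abs_schrodingerOp_add hε.le (u := u) (hd k hk)
  have hneighbours := add_le_add (hK (k - 1)) (hK (k + 1))
  rw [le_div_iff₀ hδ]
  nlinarith [hmax z hz, hHu k hk, mul_le_mul_of_nonneg_left hneighbours hε.le, abs_nonneg (u k)]

namespace IsGreenColumn

theorem abs_le_mul_pow (hG : IsGreenColumn ε d u a b n) (hε : 0 < ε) (hεδ : 4 * ε ≤ δ)
    (hd : ∀ m ∈ Finset.Icc a b, δ ≤ |d m|) (N : ℕ) :
    ∀ z, N ≤ (z - n).natAbs → |u z| ≤ 2 / δ * (2 * ε / δ) ^ N := by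
  have hδ : 0 < δ := by linarith
  induction N with
  | zero =>
    intro z _
    have h := abs_le_of_abs_schrodingerOp_le hε hεδ hd hG.eq_zero zero_le_one
      (fun m hm => by rw [hG.schrodingerOp_eq m hm]; split_ifs <;> norm_num) z
    simpa using h
  | succ N ih =>
    intro z hz
    by_cases hzab : z ∈ Finset.Icc a b
    swap
    · rw [hG.eq_zero z hzab, abs_zero]; positivity
    have hzn : z ≠ n := by omega
    have hrow := mul_abs_le_abs_schrodingerOp_add hε.le (u := u) (hd z hzab)
    rw [hG.schrodingerOp_eq z hzab, if_neg hzn, abs_zero, zero_add] at hrow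
    have hneighbours := add_le_add (ih (z - 1) (by omega)) (ih (z + 1) (by omega))
    calc |u z| ≤ ε * (|u (z - 1)| + |u (z + 1)|) / δ := by rw [le_div_iff₀ hδ]; linarith
      _ ≤ ε * (2 / δ * (2 * ε / δ) ^ N + 2 / δ * (2 * ε / δ) ^ N) / δ := by gcongr
      _ = 2 / δ * (2 * ε / δ) ^ (N + 1) := by ring

theorem neg (hG : IsGreenColumn ε d u a b n) :
    IsGreenColumn ε (fun z => d (-z)) (fun z => u (-z)) (-b) (-a) (-n) where
  eq_zero z hz := hG.eq_zero (-z) (by simp only [Finset.mem_Icc] at hz ⊢; omega)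
  schrodingerOp_eq m hm := by
    rw [schrodingerOp_neg, hG.schrodingerOp_eq (-m) (by simp only [Finset.mem_Icc] at hm ⊢; omega)]
    simp only [neg_eq_iff_eq_neg]

theorem abs_sub_one_le (hG : IsGreenColumn ε d u a b n) (hε : 0 < ε) (hεδ : 4 * ε ≤ δ)
    (hd : ∀ m ∈ Finset.Icc a b, δ ≤ |d m|) (hnb : n ≤ b) {j : ℤ} (haj : a ≤ j) (hjn : j ≤ n) :
    |u (j - 1)| ≤ |u j| := by
  induction j, haj using Int.leInduction with
  | base => rw [hG.eq_zero (a - 1) (by simp), abs_zero]; exact abs_nonneg _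
  | succ j haj ih =>
    have hjab : j ∈ Finset.Icc a b := Finset.mem_Icc.mpr ⟨haj, by omega⟩
    have hrow := mul_abs_le_abs_schrodingerOp_add hε.le (u := u) (hd j hjab)
    rw [hG.schrodingerOp_eq j hjab, if_neg (by omega), abs_zero, zero_add] at hrow
    rw [add_sub_cancel_right]
    nlinarith [ih (by omega), abs_nonneg (u j)]

theorem eq_zero_of_le (hG : IsGreenColumn ε d u a b n) (hε : 0 < ε) (hεδ : 4 * ε ≤ δ)
    (hd : ∀ m ∈ Finset.Icc a b, δ ≤ |d m|) (hnb : n ≤ b) {m : ℤ} (ham : a ≤ m) (hmn : m ≤ n)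
    (hum : u m = 0) : u (n - 1) = 0 ∧ u n = 0 := by
  have hstart : u (m - 1) = 0 := by
    simpa [hum] using hG.abs_sub_one_le hε hεδ hd hnb ham hmn
  suffices ∀ j, m ≤ j → j ≤ n → u (j - 1) = 0 ∧ u j = 0 from this n hmn le_rfl
  intro j hmj
  induction j, hmj using Int.leInduction with
  | base => exact fun _ => ⟨hstart, hum⟩
  | succ j hmj ih =>
    intro hjn
    obtain ⟨hprev, hcur⟩ := ih (by omega)
    have hrow := hG.schrodingerOp_eq j (Finset.mem_Icc.mpr ⟨by omega, by omega⟩)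
    rw [if_neg (by omega), schrodingerOp, hprev, hcur] at hrow
    refine ⟨by rwa [add_sub_cancel_right], ?_⟩
    simpa [hε.ne'] using hrow

theorem ne_zero (hG : IsGreenColumn ε d u a b n) (hε : 0 < ε) (hεδ : 4 * ε ≤ δ)
    (hd : ∀ m ∈ Finset.Icc a b, δ ≤ |d m|) (hn : n ∈ Finset.Icc a b) {m : ℤ}
    (hm : m ∈ Finset.Icc a b) : u m ≠ 0 := by
  rw [Finset.mem_Icc] at hn hm
  have hd' : ∀ m ∈ Finset.Icc (-b) (-a), δ ≤ |d (-m)| := fun m hm =>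
    hd (-m) (by simp only [Finset.mem_Icc] at hm ⊢; omega)
  have left {m : ℤ} (ham : a ≤ m) (hmn : m ≤ n) (hum : u m = 0) :=
    hG.eq_zero_of_le hε hεδ hd hn.2 ham hmn hum
  have right {m : ℤ} (hnm : n ≤ m) (hmb : m ≤ b) (hum : u m = 0) : u (n + 1) = 0 ∧ u n = 0 := by
    simpa [add_comm] using hG.neg.eq_zero_of_le hε hεδ hd' (by omega) (m := -m) (by omega) (by omega)
      (by simpa using hum)
  have hrow := hG.schrodingerOp_eq n (Finset.mem_Icc.mpr hn)
  rw [if_pos rfl, schrodingerOp] at hrow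
  intro hum
  rcases le_total m n with hmn | hnm
  · obtain ⟨h₁, h₂⟩ := left hm.1 hmn hum
    rw [h₁, h₂, (right le_rfl hn.2 h₂).1] at hrow
    simp at hrow
  · obtain ⟨h₁, h₂⟩ := right hnm hm.2 hum
    rw [h₁, h₂, (left hn.1 le_rfl h₂).1] at hrow
    simp at hrow

end IsGreenColumn

end

lemma extend_val_eq_zero {a b : ℤ} (u : ↥(Finset.Icc a b) → ℝ) {z : ℤ}
    (hz : z ∉ Finset.Icc a b) : Function.extend Subtype.val u 0 z = 0 :=
  Function.extend_apply' _ _ _ (by rintro ⟨j, rfl⟩; exact hz j.2)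

lemma sum_ite_eq_mul_extend {a b : ℤ} (u : ↥(Finset.Icc a b) → ℝ) (k : ℤ) (c : ℝ) :
    ∑ j : ↥(Finset.Icc a b), (if (j : ℤ) = k then c else 0) * u j =
      c * Function.extend Subtype.val u 0 k := by
  by_cases hk : k ∈ Finset.Icc a b
  · rw [Fintype.sum_eq_single ⟨k, hk⟩ fun j hj => by rw [if_neg (hj ∘ Subtype.ext), zero_mul],
      if_pos rfl, Subtype.val_injective.extend_apply u 0 ⟨k, hk⟩]
  · rw [extend_val_eq_zero u hk, mul_zero]
    exact Finset.sum_eq_zero fun j _ => by rw [if_neg (fun h : (j : ℤ) = k => hk (h ▸ j.2)), zero_mul]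

lemma schrodingerMatrix_sub_smul_one_mulVec (ε : ℝ) (v : ℝ → ℝ) (α θ E : ℝ) (a b : ℤ)
    (u : ↥(Finset.Icc a b) → ℝ) (m : ↥(Finset.Icc a b)) :
    (schrodingerMatrix ε v α θ a b - E • 1).mulVec u m =
      schrodingerOp ε (fun z => v (θ + z * α) - E) (Function.extend Subtype.val u 0) m := by
  have hentry : ∀ j, (schrodingerMatrix ε v α θ a b - E • 1) m j =
      (if (j : ℤ) = m - 1 then ε else 0) + (if (j : ℤ) = m then v (θ + (m : ℤ) * α) - E else 0) +
        (if (j : ℤ) = m + 1 then ε else 0) := by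
    intro j
    simp only [schrodingerMatrix, Matrix.sub_apply, Matrix.smul_apply, Matrix.one_apply,
      Matrix.of_apply, Subtype.ext_iff, smul_eq_mul]
    split_ifs <;> first | omega | simp_all
  simp only [Matrix.mulVec, dotProduct, hentry, add_mul, Finset.sum_add_distrib,
    sum_ite_eq_mul_extend, schrodingerOp]

section Matrix

variable {ε δ α θ E : ℝ} {v : ℝ → ℝ} {a b : ℤ}

theorem isUnit_schrodingerMatrix_sub_smul_one (hε : 0 < ε) (hεδ : 4 * ε ≤ δ)
    (hd : ∀ m ∈ Finset.Icc a b, δ ≤ |v (θ + m * α) - E|) :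
    IsUnit (schrodingerMatrix ε v α θ a b - E • 1) := by
  rw [Matrix.isUnit_iff_isUnit_det, isUnit_iff_ne_zero, Ne, ← Matrix.exists_mulVec_eq_zero_iff]
  rintro ⟨w, hw, hMw⟩
  have hzero := abs_le_of_abs_schrodingerOp_le hε hεδ hd (fun z => extend_val_eq_zero w)
    le_rfl fun m hm => by
      rw [← schrodingerMatrix_sub_smul_one_mulVec ε v α θ E a b w ⟨m, hm⟩, hMw]; simp
  exact hw (funext fun j => by
    simpa [Subtype.val_injective.extend_apply] using hzero j)

theorem isGreenColumn_extend_col {R : Matrix ↥(Finset.Icc a b) ↥(Finset.Icc a b) ℝ}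
    (hR : (schrodingerMatrix ε v α θ a b - E • 1) * R = 1) (n : ↥(Finset.Icc a b)) :
    IsGreenColumn ε (fun z => v (θ + z * α) - E) (Function.extend Subtype.val (R · n) 0) a b n where
  eq_zero z hz := extend_val_eq_zero _ hz
  schrodingerOp_eq m hm := by
    rw [← schrodingerMatrix_sub_smul_one_mulVec ε v α θ E a b _ ⟨m, hm⟩]
    simp only [Matrix.mulVec, dotProduct, ← Matrix.mul_apply, hR, Matrix.one_apply, Subtype.ext_iff]

end Matrix

lemma div_four_le_abs_sub_of_near {v v' : ℝ → ℝ} {D₀ ρ₀ x xs E Es : ℝ} (hD₀ : 0 < D₀)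
    (hv' : ∀ θ, HasDerivAt v (v' θ) θ) (hbd : ∀ θ, |v' θ| ≤ D₀) (hρ₀ : ρ₀ ≤ |v xs - Es|)
    (hx : |x - xs| < ρ₀ / (8 * D₀)) (hE : |E - Es| < ρ₀ / 2) : ρ₀ / 4 ≤ |v x - E| := by
  have hlip : |v x - v xs| ≤ D₀ * |x - xs| :=
    convex_univ.norm_image_sub_le_of_norm_hasDerivWithin_le
      (fun y _ => (hv' y).hasDerivWithinAt) (fun y _ => hbd y) trivial trivial
  have hD : D₀ * |x - xs| < ρ₀ / 8 := by
    rw [lt_div_iff₀ (by positivity)] at hx; linarith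
  linarith [abs_sub_le (v xs) E Es, abs_sub_le (v xs) (v x) E, abs_sub_comm (v xs) (v x),
    abs_nonneg (v x - E)]

lemma log_mul_pow_le {ρ ε : ℝ} (hρ : 0 < ρ) (hρ' : ρ ≤ 1 / 64) (hε : 0 < ε) (hερ : ε ≤ ρ ^ 4)
    {N : ℕ} (hN : 1 ≤ N) :
    Real.log (8 / ρ * (8 * ε / ρ) ^ N) ≤ -(|Real.log ε| / 4) * N := by
  have hlog8 : 0 < Real.log 8 := Real.log_pos (by norm_num)
  have hlogρ : Real.log ρ ≤ -(2 * Real.log 8) :=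
    calc Real.log ρ ≤ Real.log (1 / 64) := Real.log_le_log hρ hρ'
      _ = -(2 * Real.log 8) := by
        rw [one_div, Real.log_inv, show (64 : ℝ) = 8 ^ 2 by norm_num, Real.log_pow]; push_cast; ring
  have hlogε : Real.log ε ≤ 4 * Real.log ρ := by
    simpa [Real.log_pow] using Real.log_le_log hε hερ
  have hN' : (1 : ℝ) ≤ N := by exact_mod_cast hN
  rw [abs_of_neg (by linarith), Real.log_mul (by positivity) (by positivity), Real.log_pow,
    Real.log_div (by norm_num) hρ.ne', Real.log_div (by positivity) hρ.ne',
    Real.log_mul (by norm_num) hε.ne']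
  nlinarith [mul_nonneg (sub_nonneg.2 hN')
    (by linarith : 0 ≤ -(Real.log 8 + 3 / 4 * Real.log ε - Real.log ρ))]

theorem initial_green_decay_general (v v' : ℝ → ℝ) (D₀ : ℝ) (hD₀ : 0 < D₀)
    (hv' : ∀ θ, HasDerivAt v (v' θ) θ)
    (hbd : ∀ θ, |v' θ| ≤ D₀)
    (α θs Es ρ₀ ε : ℝ) (hρ₀ : 0 < ρ₀) (hρ₀' : ρ₀ ≤ 1 / 64)
    (hε : 0 < ε) (hε' : ε ≤ ρ₀ ^ 4)
    (a b : ℤ)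
    (hnr : ∀ m ∈ Finset.Icc a b, ρ₀ ≤ |v (θs + (m : ℝ) * α) - Es|) :
    ∀ θ : ℝ, |θ - θs| < ρ₀ / (8 * D₀) → ∀ E : ℝ, |E - Es| < ρ₀ / 2 →
      IsUnit (schrodingerMatrix ε v α θ a b - E • 1) ∧
      ∀ m n : ↥(Finset.Icc a b),
        |(schrodingerMatrix ε v α θ a b - E • 1)⁻¹ m n| ≤
          (8 / ρ₀) * (8 * ε / ρ₀) ^ (((m : ℤ) - (n : ℤ)).natAbs) ∧
        (1 ≤ ((m : ℤ) - (n : ℤ)).natAbs →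
          Real.log |(schrodingerMatrix ε v α θ a b - E • 1)⁻¹ m n| ≤
            -(|Real.log ε| / 4) * (((m : ℤ) - (n : ℤ)).natAbs : ℝ)) := by
  intro θ hθ E hE
  have hd : ∀ m ∈ Finset.Icc a b, ρ₀ / 4 ≤ |v (θ + m * α) - E| := fun m hm =>
    div_four_le_abs_sub_of_near hD₀ hv' hbd (hnr m hm) (by rwa [add_sub_add_right_eq_sub]) hE
  have hερ : 4 * ε ≤ ρ₀ / 4 := by nlinarith [pow_le_pow_left₀ hρ₀.le hρ₀' 3]
  have hM := isUnit_schrodingerMatrix_sub_smul_one hε hερ hd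
  refine ⟨hM, fun m n => ?_⟩
  have hG := isGreenColumn_extend_col
    (Matrix.mul_nonsing_inv _ ((Matrix.isUnit_iff_isUnit_det _).mp hM)) n
  have hbound : |(schrodingerMatrix ε v α θ a b - E • 1)⁻¹ m n| ≤
      8 / ρ₀ * (8 * ε / ρ₀) ^ ((m : ℤ) - n).natAbs := by
    have h := hG.abs_le_mul_pow hε hερ hd _ m le_rfl
    rw [Subtype.val_injective.extend_apply] at h
    convert h using 2 <;> ring
  refine ⟨hbound, fun hN => ?_⟩
  have hpos : 0 < |(schrodingerMatrix ε v α θ a b - E • 1)⁻¹ m n| := abs_pos.mpr <| by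
    simpa [Subtype.val_injective.extend_apply] using hG.ne_zero hε hερ hd n.2 m.2
  exact (Real.log_le_log hpos hbound).trans (log_mul_pow_le hρ₀ hρ₀' hε hε' hN)

/-- **Initial-scale Green's function decay** (Neumann series): if `|v(θ* + mα) − E*| ≥ ρ₀` on `Λ`
and `ε ≤ ρ₀⁴`, then for `θ` near `θ*` and `E` near `E*` the matrix `H^Λ(θ) − E` is invertible,
its inverse has off-diagonal decay `|R(m,n)| ≤ (8/ρ₀)(8ε/ρ₀)^{|m−n|}`, and in particular
`log|R(m,n)| ≤ −(|log ε|/4)|m−n|` for `|m−n| ≥ 1`. -/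
theorem initial_green_decay (v v' : ℝ → ℝ) (D₀ : ℝ) (hD₀ : 0 < D₀)
    (hper : ∀ θ, v (θ + 1) = v θ)
    (hv' : ∀ θ, HasDerivAt v (v' θ) θ) (hv'cont : Continuous v')
    (hbd : ∀ θ, |v' θ| ≤ D₀)
    (α θs Es ρ₀ ε : ℝ) (hρ₀ : 0 < ρ₀) (hρ₀' : ρ₀ ≤ 1 / 64)
    (hε : 0 < ε) (hε' : ε ≤ ρ₀ ^ 4)
    (a b : ℤ) (hab : a ≤ b)
    (hnr : ∀ m ∈ Finset.Icc a b, ρ₀ ≤ |v (θs + (m : ℝ) * α) - Es|) :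
    ∀ θ : ℝ, |θ - θs| < ρ₀ / (8 * D₀) → ∀ E : ℝ, |E - Es| < ρ₀ / 2 →
      IsUnit (schrodingerMatrix ε v α θ a b - E • 1) ∧
      ∀ m n : ↥(Finset.Icc a b),
        |(schrodingerMatrix ε v α θ a b - E • 1)⁻¹ m n| ≤
          (8 / ρ₀) * (8 * ε / ρ₀) ^ (((m : ℤ) - (n : ℤ)).natAbs) ∧
        (1 ≤ ((m : ℤ) - (n : ℤ)).natAbs →
          Real.log |(schrodingerMatrix ε v α θ a b - E • 1)⁻¹ m n| ≤
            -(|Real.log ε| / 4) * (((m : ℤ) - (n : ℤ)).natAbs : ℝ)) :=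
  initial_green_decay_general v v' D₀ hD₀ hv' hbd α θs Es ρ₀ ε hρ₀ hρ₀' hε hε' a b hnr
end

section
/- Under Assumption (C): (a) if [s,t] ⊆ I₋ or [s,t] ⊆ I₊ and |f′(θ)| < d/2 for all θ ∈ [s,t], then f′ is strictly monotone on [s,t]; (b) every critical point of f is a boundary point of I₋ or of I₊ that is not a boundary point of I, and hence belongs to I₋ ∩ I₊; in particular f has no critical point in the interior of I₋ or of I₊; (c) every connected component of the set {θ ∈ I₋ : |f′(θ)| < ν} and of the set {θ ∈ I₊ : |f′(θ)| < ν} contains a critical point of f. -/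
open Set

/-- On an interval where the derivative never vanishes, a function is strictly monotone. -/
private lemma strict_aux {s t : ℝ} {g g' : ℝ → ℝ}
    (hder : ∀ x ∈ Icc s t, HasDerivAt g (g' x) x)
    (hcont : ContinuousOn g' (Icc s t))
    (hne : ∀ x ∈ Icc s t, g' x ≠ 0) :
    StrictMonoOn g (Icc s t) ∨ StrictAntiOn g (Icc s t) := by
  have hc : ContinuousOn g (Icc s t) := fun x hx => (hder x hx).continuousAt.continuousWithinAt
  have hsign : (∀ x ∈ Icc s t, 0 < g' x) ∨ (∀ x ∈ Icc s t, g' x < 0) := by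
    by_contra h
    push_neg at h
    obtain ⟨⟨x, hx, hx0⟩, ⟨y, hy, hy0⟩⟩ := h
    have hsub : uIcc x y ⊆ Icc s t := (ordConnected_Icc).uIcc_subset hx hy
    have h0 : (0 : ℝ) ∈ uIcc (g' x) (g' y) := mem_uIcc.mpr (Or.inl ⟨hx0, hy0⟩)
    obtain ⟨z, hz, hz0⟩ := intermediate_value_uIcc (hcont.mono hsub) h0
    exact hne z (hsub hz) hz0
  rcases hsign with h | h
  · left
    refine strictMonoOn_of_deriv_pos (convex_Icc s t) hc (fun x hx => ?_)
    have hx' : x ∈ Icc s t := interior_subset hx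
    rw [(hder x hx').deriv]
    exact h x hx'
  · right
    refine strictAntiOn_of_deriv_neg (convex_Icc s t) hc (fun x hx => ?_)
    have hx' : x ∈ Icc s t := interior_subset hx
    rw [(hder x hx').deriv]
    exact h x hx'

/-- An endpoint of one branch which is interior to the union lies in the other branch. -/
private lemma mem_other {a b c e θ : ℝ} (h1 : θ ∈ Icc a b) (hnoto : θ ∉ Ioo a b)
    (hint : θ ∈ interior (Icc a b ∪ Icc c e)) : θ ∈ Icc c e := by
  have hab : θ = a ∨ θ = b := by
    rcases eq_or_lt_of_le h1.1 with h | h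
    · exact Or.inl h.symm
    rcases eq_or_lt_of_le h1.2 with h' | h'
    · exact Or.inr h'
    · exact absurd ⟨h, h'⟩ hnoto
  obtain ⟨ε, hε, hball⟩ := Metric.isOpen_iff.mp isOpen_interior θ hint
  have hsub : Metric.ball θ ε ⊆ Icc a b ∪ Icc c e := hball.trans interior_subset
  have hcl : θ ∈ closure (Icc c e) := by
    rw [Metric.mem_closure_iff]
    intro δ hδ
    set r := min ε δ / 2 with hr
    have hr0 : 0 < r := by positivity
    have hrε : r < ε := by
      have := min_le_left ε δ; linarith
    have hrδ : r < δ := by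
      have := min_le_right ε δ; linarith
    rcases hab with h | h
    · refine ⟨θ - r, ?_, ?_⟩
      · have hmem : θ - r ∈ Icc a b ∪ Icc c e := by
          apply hsub
          rw [Metric.mem_ball, Real.dist_eq]
          rw [show θ - r - θ = -r by ring, abs_neg, abs_of_nonneg hr0.le]
          exact hrε
        rcases hmem with hm | hm
        · exact absurd hm.1 (by rw [h]; linarith)
        · exact hm
      · rw [Real.dist_eq, show θ - (θ - r) = r by ring, abs_of_nonneg hr0.le]
        exact hrδ
    · refine ⟨θ + r, ?_, ?_⟩
      · have hmem : θ + r ∈ Icc a b ∪ Icc c e := by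
          apply hsub
          rw [Metric.mem_ball, Real.dist_eq]
          rw [show θ + r - θ = r by ring, abs_of_nonneg hr0.le]
          exact hrε
        rcases hmem with hm | hm
        · exact absurd hm.2 (by rw [h]; linarith)
        · exact hm
      · rw [Real.dist_eq, show θ - (θ + r) = -r by ring, abs_neg, abs_of_nonneg hr0.le]
        exact hrδ
  rwa [isClosed_Icc.closure_eq] at hcl

/-- Part (c) for the decreasing branch. -/
private lemma branch_crit {am bm ap bp d ν : ℝ} {f' f'' : ℝ → ℝ}
    (hder2 : ∀ θ ∈ Icc am bm ∪ Icc ap bp, HasDerivAt f' (f'' θ) θ)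
    (hcont2 : ContinuousOn f'' (Icc am bm ∪ Icc ap bp))
    (hneg : ∀ θ ∈ Icc am bm, f' θ ≤ 0)
    (hpos : ∀ θ ∈ Icc ap bp, 0 ≤ f' θ)
    (hMorse : ∀ θ ∈ Icc am bm ∪ Icc ap bp, d ≤ |f' θ| + |f'' θ|)
    (hν : 0 < ν) (hνd : ν < d / 2)
    (hbdry : ∀ θ ∈ frontier (Icc am bm ∪ Icc ap bp), ν ≤ |f' θ|)
    {θ : ℝ} (hθI : θ ∈ Icc am bm) (hθν : |f' θ| < ν) :
    ∃ θc ∈ connectedComponentIn {x ∈ Icc am bm | |f' x| < ν} θ, f' θc = 0 := by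
  set S : Set ℝ := {x ∈ Icc am bm | |f' x| < ν} with hS
  have hθS : θ ∈ S := ⟨hθI, hθν⟩
  set C := connectedComponentIn S θ with hCdef
  have hθC : θ ∈ C := mem_connectedComponentIn hθS
  have hCS : C ⊆ S := connectedComponentIn_subset S θ
  have hCI : C ⊆ Icc am bm := fun x hx => (hCS hx).1
  have hCne : C.Nonempty := ⟨θ, hθC⟩
  have hbdda : BddAbove C := ⟨bm, fun x hx => (hCI hx).2⟩
  have hbddb : BddBelow C := ⟨am, fun x hx => (hCI hx).1⟩
  set α := sInf C with hα
  set β := sSup C with hβ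
  have hamα : am ≤ α := le_csInf hCne (fun x hx => (hCI hx).1)
  have hβbm : β ≤ bm := csSup_le hCne (fun x hx => (hCI hx).2)
  have hαθ : α ≤ θ := csInf_le hbddb hθC
  have hθβ : θ ≤ β := le_csSup hbdda hθC
  have hIooC : Ioo α β ⊆ C := by
    intro x hx
    obtain ⟨y, hyC, hyx⟩ := exists_lt_of_csInf_lt hCne hx.1
    obtain ⟨z, hzC, hxz⟩ := exists_lt_of_lt_csSup hCne hx.2
    exact (isPreconnected_connectedComponentIn.ordConnected.out hyC hzC) ⟨hyx.le, hxz.le⟩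
  have hcont' : ∀ x ∈ Icc am bm, ContinuousAt f' x :=
    fun x hx => (hder2 x (Or.inl hx)).continuousAt
  -- any branch endpoint belonging to C is a critical point
  have hcrit : ∀ x ∈ C, (x = am ∨ x = bm) → f' x = 0 := by
    intro x hxC hxe
    have hxS := hCS hxC
    have hxf : x ∉ frontier (Icc am bm ∪ Icc ap bp) := fun hf =>
      absurd hxS.2 (not_lt.mpr (hbdry x hf))
    have hxint : x ∈ interior (Icc am bm ∪ Icc ap bp) := by
      have hcl : IsClosed (Icc am bm ∪ Icc ap bp) := isClosed_Icc.union isClosed_Icc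
      rw [frontier, hcl.closure_eq] at hxf
      by_contra h
      exact hxf ⟨Or.inl hxS.1, h⟩
    have hxIoo : x ∉ Ioo am bm := by
      rcases hxe with h | h
      · rw [h]; exact fun hh => lt_irrefl _ hh.1
      · rw [h]; exact fun hh => lt_irrefl _ hh.2
    have hxp : x ∈ Icc ap bp := mem_other hxS.1 hxIoo hxint
    exact le_antisymm (hneg x hxS.1) (hpos x hxp)
  by_cases hαC : α ∈ C
  · -- left endpoint is in C, hence equals am, hence critical
    have hαam : α = am := by
      by_contra hne'
      have hamlt : am < α := lt_of_le_of_ne hamα (fun h => hne' h.symm)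
      have hcα : ContinuousAt f' α := hcont' α (hCI hαC)
      have hev : ∀ᶠ y in nhds α, |f' y| ∈ Iio ν :=
        hcα.abs.eventually_mem (Iio_mem_nhds (hCS hαC).2)
      obtain ⟨δ, hδ0, hδ⟩ := Metric.eventually_nhds_iff.mp hev
      set x := max am (α - δ/2) with hxdef
      have hxα : x < α := max_lt hamlt (by linarith)
      have hxam : am ≤ x := le_max_left _ _
      have hsub2 : Icc x α ⊆ S := by
        intro y hy
        refine ⟨⟨hxam.trans hy.1, hy.2.trans (hCI hαC).2⟩, ?_⟩
        apply hδ
        rw [Real.dist_eq, abs_of_nonpos (by linarith [hy.2])]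
        have h2 : α - δ/2 ≤ x := le_max_right _ _
        have := hy.1
        linarith
      have hTC : C ∪ Icc x α ⊆ C :=
        IsPreconnected.subset_connectedComponentIn
          (IsPreconnected.union α hαC ⟨hxα.le, le_refl α⟩
            isPreconnected_connectedComponentIn isPreconnected_Icc)
          (Or.inl hθC) (union_subset hCS hsub2)
      have hxC : x ∈ C := hTC (Or.inr ⟨le_refl x, hxα.le⟩)
      exact absurd (csInf_le hbddb hxC) (not_le.mpr hxα)
    exact ⟨α, hαC, hcrit α hαC (Or.inl hαam)⟩
  by_cases hβC : β ∈ C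
  · -- right endpoint is in C, hence equals bm, hence critical
    have hβbm' : β = bm := by
      by_contra hne'
      have hbmgt : β < bm := lt_of_le_of_ne hβbm hne'
      have hcβ : ContinuousAt f' β := hcont' β (hCI hβC)
      have hev : ∀ᶠ y in nhds β, |f' y| ∈ Iio ν :=
        hcβ.abs.eventually_mem (Iio_mem_nhds (hCS hβC).2)
      obtain ⟨δ, hδ0, hδ⟩ := Metric.eventually_nhds_iff.mp hev
      set x := min bm (β + δ/2) with hxdef
      have hxβ : β < x := lt_min hbmgt (by linarith)
      have hxbm : x ≤ bm := min_le_left _ _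
      have hsub2 : Icc β x ⊆ S := by
        intro y hy
        refine ⟨⟨(hCI hβC).1.trans hy.1, hy.2.trans hxbm⟩, ?_⟩
        apply hδ
        rw [Real.dist_eq, abs_of_nonneg (by linarith [hy.1])]
        have h2 : x ≤ β + δ/2 := min_le_right _ _
        have := hy.2
        linarith
      have hTC : C ∪ Icc β x ⊆ C :=
        IsPreconnected.subset_connectedComponentIn
          (IsPreconnected.union β hβC ⟨le_refl β, hxβ.le⟩
            isPreconnected_connectedComponentIn isPreconnected_Icc)
          (Or.inl hθC) (union_subset hCS hsub2)
      have hxC : x ∈ C := hTC (Or.inr ⟨hxβ.le, le_refl x⟩)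
      exact absurd (le_csSup hbdda hxC) (not_le.mpr hxβ)
    exact ⟨β, hβC, hcrit β hβC (Or.inr hβbm')⟩
  -- both endpoints excluded: contradiction with strict monotonicity
  exfalso
  have hαβ : α < β := by
    rcases eq_or_lt_of_le (hαθ.trans hθβ) with h | h
    · refine absurd (show α ∈ C from ?_) hαC
      have hαeq : α = θ := le_antisymm hαθ (by rw [h]; exact hθβ)
      rw [hαeq]; exact hθC
    · exact h
  have hαI : α ∈ Icc am bm := ⟨hamα, hαθ.trans hθI.2⟩
  have hβI : β ∈ Icc am bm := ⟨hθI.1.trans hθβ, hβbm⟩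
  have hcα : ContinuousAt f' α := hcont' α hαI
  have hcβ : ContinuousAt f' β := hcont' β hβI
  -- |f' α| ≥ ν
  have hαge : ν ≤ |f' α| := by
    by_contra h
    push_neg at h
    obtain ⟨δ, hδ0, hδ⟩ := Metric.eventually_nhds_iff.mp
      (hcα.abs.eventually_mem (Iio_mem_nhds h))
    set p := min ((α+β)/2) (α + δ/2) with hpdef
    have hαp : α < p := lt_min (by linarith) (by linarith)
    have hpβ : p < β := lt_of_le_of_lt (min_le_left _ _) (by linarith)
    have hsub2 : Icc α p ⊆ S := by
      intro y hy
      refine ⟨⟨hamα.trans hy.1, (hy.2.trans hpβ.le).trans hβbm⟩, ?_⟩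
      apply hδ
      rw [Real.dist_eq, abs_of_nonneg (by linarith [hy.1])]
      have h2 : p ≤ α + δ/2 := min_le_right _ _
      have := hy.2
      linarith
    have hpC : p ∈ C := hIooC ⟨hαp, hpβ⟩
    have hTC : C ∪ Icc α p ⊆ C :=
      IsPreconnected.subset_connectedComponentIn
        (IsPreconnected.union p hpC ⟨hαp.le, le_refl p⟩
          isPreconnected_connectedComponentIn isPreconnected_Icc)
        (Or.inl hθC) (union_subset hCS hsub2)
    exact hαC (hTC (Or.inr ⟨le_refl α, hαp.le⟩))
  -- |f' α| ≤ ν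
  have hαle : |f' α| ≤ ν := by
    by_contra h
    push_neg at h
    obtain ⟨δ, hδ0, hδ⟩ := Metric.eventually_nhds_iff.mp
      (hcα.abs.eventually_mem (Ioi_mem_nhds h))
    set p := min ((α+β)/2) (α + δ/2) with hpdef
    have hαp : α < p := lt_min (by linarith) (by linarith)
    have hpβ : p < β := lt_of_le_of_lt (min_le_left _ _) (by linarith)
    have hpC : p ∈ C := hIooC ⟨hαp, hpβ⟩
    have h1 : ν < |f' p| := by
      apply hδ
      rw [Real.dist_eq, abs_of_nonneg (by linarith)]
      have h2 : p ≤ α + δ/2 := min_le_right _ _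
      linarith
    exact absurd (hCS hpC).2 (not_lt.mpr h1.le)
  -- |f' β| ≥ ν
  have hβge : ν ≤ |f' β| := by
    by_contra h
    push_neg at h
    obtain ⟨δ, hδ0, hδ⟩ := Metric.eventually_nhds_iff.mp
      (hcβ.abs.eventually_mem (Iio_mem_nhds h))
    set p := max ((α+β)/2) (β - δ/2) with hpdef
    have hpβ : p < β := max_lt (by linarith) (by linarith)
    have hαp : α < p := lt_of_lt_of_le (by linarith) (le_max_left _ _)
    have hsub2 : Icc p β ⊆ S := by
      intro y hy
      refine ⟨⟨hamα.trans ((hαp.trans_le hy.1).le), hy.2.trans hβbm⟩, ?_⟩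
      apply hδ
      rw [Real.dist_eq, abs_of_nonpos (by linarith [hy.2])]
      have h2 : β - δ/2 ≤ p := le_max_right _ _
      have := hy.1
      linarith
    have hpC : p ∈ C := hIooC ⟨hαp, hpβ⟩
    have hTC : C ∪ Icc p β ⊆ C :=
      IsPreconnected.subset_connectedComponentIn
        (IsPreconnected.union p hpC ⟨le_refl p, hpβ.le⟩
          isPreconnected_connectedComponentIn isPreconnected_Icc)
        (Or.inl hθC) (union_subset hCS hsub2)
    exact hβC (hTC (Or.inr ⟨hpβ.le, le_refl β⟩))
  -- |f' β| ≤ ν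
  have hβle : |f' β| ≤ ν := by
    by_contra h
    push_neg at h
    obtain ⟨δ, hδ0, hδ⟩ := Metric.eventually_nhds_iff.mp
      (hcβ.abs.eventually_mem (Ioi_mem_nhds h))
    set p := max ((α+β)/2) (β - δ/2) with hpdef
    have hpβ : p < β := max_lt (by linarith) (by linarith)
    have hαp : α < p := lt_of_lt_of_le (by linarith) (le_max_left _ _)
    have hpC : p ∈ C := hIooC ⟨hαp, hpβ⟩
    have h1 : ν < |f' p| := by
      apply hδ
      rw [Real.dist_eq, abs_of_nonpos (by linarith)]
      have h2 : β - δ/2 ≤ p := le_max_right _ _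
      linarith
    exact absurd (hCS hpC).2 (not_lt.mpr h1.le)
  have hfα : f' α = -ν := by
    have h1 : |f' α| = ν := le_antisymm hαle hαge
    have h2 : f' α ≤ 0 := hneg α hαI
    rw [abs_of_nonpos h2] at h1
    linarith
  have hfβ : f' β = -ν := by
    have h1 : |f' β| = ν := le_antisymm hβle hβge
    have h2 : f' β ≤ 0 := hneg β hβI
    rw [abs_of_nonpos h2] at h1
    linarith
  have hd0 : 0 < d := by linarith
  have hsm : StrictMonoOn f' (Icc α β) ∨ StrictAntiOn f' (Icc α β) := by
    have hsubI : Icc α β ⊆ Icc am bm := fun x hx => ⟨hamα.trans hx.1, hx.2.trans hβbm⟩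
    refine strict_aux (fun x hx => hder2 x (Or.inl (hsubI hx)))
      (hcont2.mono (fun x hx => Or.inl (hsubI hx))) (fun x hx h0 => ?_)
    have hxd : |f' x| < d/2 := by
      rcases eq_or_lt_of_le hx.1 with h | h
      · rw [← h]; calc |f' α| ≤ ν := hαle
          _ < d/2 := hνd
      rcases eq_or_lt_of_le hx.2 with h' | h'
      · rw [h']; calc |f' β| ≤ ν := hβle
          _ < d/2 := hνd
      · exact lt_trans (hCS (hIooC ⟨h, h'⟩)).2 hνd
    have hM := hMorse x (Or.inl (hsubI hx))
    rw [h0, abs_zero, add_zero] at hM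
    linarith
  have hαβm : α ∈ Icc α β := ⟨le_refl α, hαβ.le⟩
  have hβm : β ∈ Icc α β := ⟨hαβ.le, le_refl β⟩
  rcases hsm with h | h
  · exact absurd (hfα.trans hfβ.symm) (h hαβm hβm hαβ).ne
  · exact absurd (hfα.trans hfβ.symm) (h hαβm hβm hαβ).ne'


/-- **Structure of critical points of a cosine-like (Morse, two-branch) function.**
Under Assumption (C): (a) on any subinterval of a single branch where `|f′| < d/2`, the
derivative `f′` is strictly monotone; (b) every critical point of `f` is an endpoint of `I₋`
or `I₊` which is not a boundary point of `I`, hence lies in `I₋ ∩ I₊` and in the interior of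
neither branch; (c) every connected component of `{|f′| < ν}` in a branch contains a critical
point. -/
theorem monotone_derivative_and_critical_points
    (am bm ap bp d D ν : ℝ) (f f' f'' : ℝ → ℝ)
    (hlem : am ≤ bm) (hlep : ap ≤ bp)
    (hdisj : Set.Ioo am bm ∩ Set.Ioo ap bp = ∅)
    (hd : 0 < d) (hdD : d ≤ D)
    (hder1 : ∀ θ ∈ Set.Icc am bm ∪ Set.Icc ap bp, HasDerivAt f (f' θ) θ)
    (hder2 : ∀ θ ∈ Set.Icc am bm ∪ Set.Icc ap bp, HasDerivAt f' (f'' θ) θ)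
    (hcont2 : ContinuousOn f'' (Set.Icc am bm ∪ Set.Icc ap bp))
    (hneg : ∀ θ ∈ Set.Icc am bm, f' θ ≤ 0)
    (hpos : ∀ θ ∈ Set.Icc ap bp, 0 ≤ f' θ)
    (hMorse : ∀ θ ∈ Set.Icc am bm ∪ Set.Icc ap bp,
      d ≤ |f' θ| + |f'' θ| ∧ |f' θ| + |f'' θ| ≤ D)
    (himg : f '' Set.Icc am bm = f '' Set.Icc ap bp)
    (hν : 0 < ν) (hνd : ν < d / 2)
    (hbdry : ∀ θ ∈ frontier (Set.Icc am bm ∪ Set.Icc ap bp), ν ≤ |f' θ|) :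
    -- (a)
    (∀ s t : ℝ, s ≤ t →
      (Set.Icc s t ⊆ Set.Icc am bm ∨ Set.Icc s t ⊆ Set.Icc ap bp) →
      (∀ θ ∈ Set.Icc s t, |f' θ| < d / 2) →
      StrictMonoOn f' (Set.Icc s t) ∨ StrictAntiOn f' (Set.Icc s t)) ∧
    -- (b)
    (∀ θc ∈ Set.Icc am bm ∪ Set.Icc ap bp, f' θc = 0 →
      (θc = am ∨ θc = bm ∨ θc = ap ∨ θc = bp) ∧
      θc ∉ frontier (Set.Icc am bm ∪ Set.Icc ap bp) ∧
      θc ∈ Set.Icc am bm ∩ Set.Icc ap bp ∧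
      θc ∉ Set.Ioo am bm ∧ θc ∉ Set.Ioo ap bp) ∧
    -- (c)
    (∀ θ ∈ Set.Icc am bm, |f' θ| < ν →
      ∃ θc ∈ connectedComponentIn {x ∈ Set.Icc am bm | |f' x| < ν} θ, f' θc = 0) ∧
    (∀ θ ∈ Set.Icc ap bp, |f' θ| < ν →
      ∃ θc ∈ connectedComponentIn {x ∈ Set.Icc ap bp | |f' x| < ν} θ, f' θc = 0) := by
  refine ⟨?_, ?_, ?_, ?_⟩
  -- (a)
  · intro s t hst hsub hsmall
    have hsubI : Icc s t ⊆ Icc am bm ∪ Icc ap bp := by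
      rcases hsub with h | h
      · exact fun x hx => Or.inl (h hx)
      · exact fun x hx => Or.inr (h hx)
    refine strict_aux (fun x hx => hder2 x (hsubI hx)) (hcont2.mono hsubI)
      (fun x hx h0 => ?_)
    have hM := (hMorse x (hsubI hx)).1
    have := hsmall x hx
    rw [h0, abs_zero, add_zero] at hM
    linarith
  -- (b)
  · intro θc hθc h0
    have hfront : θc ∉ frontier (Icc am bm ∪ Icc ap bp) := by
      intro hf
      have := hbdry θc hf
      rw [h0, abs_zero] at this
      linarith
    have hint : θc ∈ interior (Icc am bm ∪ Icc ap bp) := by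
      have hcl : IsClosed (Icc am bm ∪ Icc ap bp) := isClosed_Icc.union isClosed_Icc
      rw [frontier, hcl.closure_eq] at hfront
      by_contra h
      exact hfront ⟨hθc, h⟩
    have hIoom : θc ∉ Ioo am bm := by
      intro hio
      have hmax : IsLocalMax f' θc := by
        have hn : Ioo am bm ∈ nhds θc := Ioo_mem_nhds hio.1 hio.2
        exact Filter.eventually_of_mem hn (fun y hy => by
          rw [h0]; exact hneg y (Ioo_subset_Icc_self hy))
      have h2 := hmax.hasDerivAt_eq_zero (hder2 θc hθc)
      have hM := (hMorse θc hθc).1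
      rw [h0, h2, abs_zero, add_zero] at hM
      linarith
    have hIoop : θc ∉ Ioo ap bp := by
      intro hio
      have hmin : IsLocalMin f' θc := by
        have hn : Ioo ap bp ∈ nhds θc := Ioo_mem_nhds hio.1 hio.2
        exact Filter.eventually_of_mem hn (fun y hy => by
          rw [h0]; exact hpos y (Ioo_subset_Icc_self hy))
      have h2 := hmin.hasDerivAt_eq_zero (hder2 θc hθc)
      have hM := (hMorse θc hθc).1
      rw [h0, h2, abs_zero, add_zero] at hM
      linarith
    have hboth : θc ∈ Icc am bm ∩ Icc ap bp := by
      rcases hθc with hm | hp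
      · exact ⟨hm, mem_other hm hIoom hint⟩
      · have hint' : θc ∈ interior (Icc ap bp ∪ Icc am bm) := by
          rwa [Set.union_comm] at hint
        exact ⟨mem_other hp hIoop hint', hp⟩
    have hends : θc = am ∨ θc = bm ∨ θc = ap ∨ θc = bp := by
      rcases eq_or_lt_of_le hboth.1.1 with h | h
      · exact Or.inl h.symm
      rcases eq_or_lt_of_le hboth.1.2 with h' | h'
      · exact Or.inr (Or.inl h')
      · exact absurd ⟨h, h'⟩ hIoom
    exact ⟨hends, hfront, hboth, hIoom, hIoop⟩
  -- (c) decreasing branch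
  · intro θ hθ hθν
    exact branch_crit hder2 hcont2 hneg hpos (fun x hx => (hMorse x hx).1) hν hνd hbdry hθ hθν
  -- (c) increasing branch, by applying the lemma to -f'
  · intro θ hθ hθν
    have hder2' : ∀ x ∈ Icc ap bp ∪ Icc am bm, HasDerivAt (fun y => -f' y) (-f'' x) x :=
      fun x hx => (hder2 x (hx.elim Or.inr Or.inl)).neg
    have hcont2' : ContinuousOn (fun y => -f'' y) (Icc ap bp ∪ Icc am bm) := by
      rw [Set.union_comm]; exact hcont2.neg
    have hneg' : ∀ x ∈ Icc ap bp, (fun y => -f' y) x ≤ 0 :=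
      fun x hx => neg_nonpos.mpr (hpos x hx)
    have hpos' : ∀ x ∈ Icc am bm, 0 ≤ (fun y => -f' y) x :=
      fun x hx => neg_nonneg.mpr (hneg x hx)
    have hMorse' : ∀ x ∈ Icc ap bp ∪ Icc am bm,
        d ≤ |(fun y => -f' y) x| + |(fun y => -f'' y) x| := by
      intro x hx
      simp only [abs_neg]
      exact (hMorse x (hx.elim Or.inr Or.inl)).1
    have hbdry' : ∀ x ∈ frontier (Icc ap bp ∪ Icc am bm), ν ≤ |(fun y => -f' y) x| := by
      intro x hx
      rw [Set.union_comm] at hx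
      simpa [abs_neg] using hbdry x hx
    have hθν' : |(fun y => -f' y) θ| < ν := by simpa [abs_neg] using hθν
    obtain ⟨θc, hmem, hz⟩ := branch_crit hder2' hcont2' hneg' hpos' hMorse' hν hνd hbdry' hθ hθν'
    have hseteq : {x ∈ Icc ap bp | |(fun y => -f' y) x| < ν} = {x ∈ Icc ap bp | |f' x| < ν} := by
      ext x; simp [abs_neg]
    rw [hseteq] at hmem
    exact ⟨θc, hmem, neg_eq_zero.mp hz⟩
end

section
/- Under Assumption (C): let E* ∈ J and let θ₋ := f₋^{−1}(E*) ∈ I₋ and θ₊ := f₊^{−1}(E*) ∈ I₊. If ‖T_f(E*)‖_𝕋 ≥ 7ν/d, then |f′(θ₋)| ≥ ν and |f′(θ₊)| ≥ ν. -/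
/-- Distance from a real number to the nearest integer, `‖x‖_𝕋`. -/
noncomputable def torusNorm (x : ℝ) : ℝ := |x - round x|

/-!
Where `|f'| < ν < d/2`, the Morse condition forces `|f''| > d/2`. Hence inside one branch `|f'|`
has no interior local minimum below `ν`, and `{|f'| < ν}` has width at most `2ν/d` around any
zero of `f'`. If `|f'(θ₋)| < ν`, then some endpoint of `I₋` also has `|f'| < ν`, so it is not a
boundary point of `I`: it is a point `c` where the two branches meet, with `f'(c) = 0`. Then
`θ₋` lies within `2ν/d` of `c`, so `|f(θ₋) - f(c)| ≤ 2ν²/d`; on the other branch `f'` climbs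
to `ν` within `5ν/(2d)` of `c` and stays there, so the partner `θ₊` with `f(θ₊) = f(θ₋)` lies
within `9ν/(2d)` of `c`. Thus `‖θ₊ - θ₋‖_𝕋 ≤ |θ₊ - θ₋| ≤ 13ν/(2d) < 7ν/d`. The bound at `θ₊`
follows by replacing `f` with `-f` and exchanging the branches.
-/

open Set

lemma torusNorm_le_abs (x : ℝ) : torusNorm x ≤ |x| := by
  unfold torusNorm
  simpa using round_le x 0

lemma mul_sub_le_sub_of_le_hasDerivAt {f f' : ℝ → ℝ} {C x y : ℝ} (hxy : x ≤ y)
    (hf : ∀ t ∈ Icc x y, HasDerivAt f (f' t) t) (hC : ∀ t ∈ Icc x y, C ≤ f' t) :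
    C * (y - x) ≤ f y - f x :=
  (convex_Icc x y).mul_sub_le_image_sub_of_le_deriv
    (fun t ht => (hf t ht).continuousAt.continuousWithinAt)
    (fun t ht => (hf t (interior_subset ht)).differentiableAt.differentiableWithinAt)
    (fun t ht => (hf t (interior_subset ht)).deriv ▸ hC t (interior_subset ht))
    x (left_mem_Icc.2 hxy) y (right_mem_Icc.2 hxy) hxy

lemma lt_and_le_of_left_mem_interior {a b p q : ℝ} (h : a ∈ interior (Icc a b ∪ Icc p q)) :
    p < a ∧ a ≤ q := by
  have hleft : Icc p q ∈ nhdsWithin a (Iio a) :=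
    Filter.mem_of_superset
      (Filter.inter_mem (nhdsWithin_le_nhds (mem_interior_iff_mem_nhds.1 h))
        self_mem_nhdsWithin)
      fun t ⟨ht, hta⟩ => ht.resolve_left fun h' => (not_le.2 hta) h'.1
  obtain ⟨l, hl, hsub⟩ := mem_nhdsLT_iff_exists_Ioo_subset.1 hleft
  have : Icc l a ⊆ Icc p q := by
    rw [← closure_Ioo (ne_of_lt hl)]
    exact closure_minimal hsub isClosed_Icc
  obtain ⟨hpl, haq⟩ := (Icc_subset_Icc_iff (le_of_lt hl)).1 this
  exact ⟨hpl.trans_lt hl, haq⟩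

lemma le_and_lt_of_right_mem_interior {a b p q : ℝ} (h : b ∈ interior (Icc a b ∪ Icc p q)) :
    p ≤ b ∧ b < q := by
  have hright : Icc p q ∈ nhdsWithin b (Ioi b) :=
    Filter.mem_of_superset
      (Filter.inter_mem (nhdsWithin_le_nhds (mem_interior_iff_mem_nhds.1 h))
        self_mem_nhdsWithin)
      fun t ⟨ht, hbt⟩ => ht.resolve_left fun h' => (not_le.2 hbt) h'.2
  obtain ⟨u, hu, hsub⟩ := mem_nhdsGT_iff_exists_Ioo_subset.1 hright
  have : Icc b u ⊆ Icc p q := by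
    rw [← closure_Ioo (ne_of_lt hu)]
    exact closure_minimal hsub isClosed_Icc
  obtain ⟨hpb, huq⟩ := (Icc_subset_Icc_iff (le_of_lt hu)).1 this
  exact ⟨hpb, hu.trans_le huq⟩

lemma IsClosed.mem_interior_of_lt {X : Type*} [TopologicalSpace X] {s : Set X} {g : X → ℝ}
    {ν : ℝ} {e : X} (hs : IsClosed s) (hbdry : ∀ t ∈ frontier s, ν ≤ g t) (he : e ∈ s)
    (hlt : g e < ν) : e ∈ interior s := by
  by_contra hi
  exact (hbdry e (by rw [hs.frontier_eq]; exact ⟨he, hi⟩)).not_gt hlt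

structure MorseOn (f f' f'' : ℝ → ℝ) (d : ℝ) (s : Set ℝ) : Prop where
  hasDerivAt : ∀ t ∈ s, HasDerivAt f (f' t) t
  hasDerivAt_deriv : ∀ t ∈ s, HasDerivAt f' (f'' t) t
  le_abs_add_abs : ∀ t ∈ s, d ≤ |f' t| + |f'' t|

namespace MorseOn

variable {f f' f'' : ℝ → ℝ} {a b c d ν x y am bm ap bp : ℝ} {s t : Set ℝ}

lemma mono (h : MorseOn f f' f'' d s) (hts : t ⊆ s) : MorseOn f f' f'' d t :=
  ⟨fun x hx => h.hasDerivAt x (hts hx), fun x hx => h.hasDerivAt_deriv x (hts hx),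
    fun x hx => h.le_abs_add_abs x (hts hx)⟩

lemma neg (h : MorseOn f f' f'' d s) : MorseOn (-f) (-f') (-f'') d s :=
  ⟨fun x hx => (h.hasDerivAt x hx).neg, fun x hx => (h.hasDerivAt_deriv x hx).neg,
    fun x hx => by simpa using h.le_abs_add_abs x hx⟩

lemma comp_neg (h : MorseOn f f' f'' d (Icc a b)) :
    MorseOn (fun x => f (-x)) (fun x => -f' (-x)) (fun x => f'' (-x)) d (Icc (-b) (-a)) := by
  refine ⟨fun x hx => ?_, fun x hx => ?_, fun x hx => ?_⟩
  · simpa [Function.comp_def] using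
      (h.hasDerivAt (-x) (neg_mem_Icc_iff.2 hx)).comp x (hasDerivAt_neg x)
  · simpa [Function.comp_def] using
      ((h.hasDerivAt_deriv (-x) (neg_mem_Icc_iff.2 hx)).comp x (hasDerivAt_neg x)).fun_neg
  · simpa using h.le_abs_add_abs (-x) (neg_mem_Icc_iff.2 hx)

lemma continuousOn_deriv (h : MorseOn f f' f'' d s) : ContinuousOn f' s :=
  fun x hx => (h.hasDerivAt_deriv x hx).continuousAt.continuousWithinAt

lemma le_abs_of_isLocalMin (h : MorseOn f f' f'' d s) (hx : x ∈ s) (hmin : IsLocalMin f' x) :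
    d ≤ |f' x| := by
  simpa [hmin.hasDerivAt_eq_zero (h.hasDerivAt_deriv x hx)] using h.le_abs_add_abs x hx

lemma deriv_pos_of_mem_Ioo (h : MorseOn f f' f'' d (Icc a b)) (hd : 0 < d)
    (hpos : ∀ t ∈ Icc a b, 0 ≤ f' t) (hx : x ∈ Ioo a b) : 0 < f' x := by
  refine (hpos x (Ioo_subset_Icc_self hx)).lt_of_ne' fun h0 => ?_
  have hmin : IsLocalMin f' x :=
    Filter.mem_of_superset (Icc_mem_nhds hx.1 hx.2) fun t ht => h0 ▸ hpos t ht
  have := h.le_abs_of_isLocalMin (Ioo_subset_Icc_self hx) hmin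
  rw [h0, abs_zero] at this
  linarith

lemma le_deriv_of_le_deriv_endpoints (h : MorseOn f f' f'' d (Icc a b)) (hνd : ν < d)
    (hpos : ∀ t ∈ Icc a b, 0 ≤ f' t) (ha : ν ≤ f' a) (hb : ν ≤ f' b) :
    ∀ t ∈ Icc a b, ν ≤ f' t := by
  intro t ht
  by_contra! hlt
  obtain ⟨σ, hσ, hmin⟩ := isCompact_Icc.exists_isMinOn ⟨t, ht⟩ h.continuousOn_deriv
  have hσν : f' σ < ν := (hmin ht).trans_lt hlt
  have haσ : a < σ := hσ.1.lt_of_ne (by rintro rfl; linarith)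
  have hσb : σ < b := hσ.2.lt_of_ne (by rintro rfl; linarith)
  have := h.le_abs_of_isLocalMin hσ (hmin.isLocalMin (Icc_mem_nhds haσ hσb))
  rw [abs_of_nonneg (hpos σ hσ)] at this
  linarith

lemma deriv_le_of_deriv_le_endpoints (h : MorseOn f f' f'' d (Icc a b)) (hνd : ν < d)
    (hneg : ∀ t ∈ Icc a b, f' t ≤ 0) (ha : f' a ≤ -ν) (hb : f' b ≤ -ν) :
    ∀ t ∈ Icc a b, f' t ≤ -ν := fun t ht => by
  have := h.neg.le_deriv_of_le_deriv_endpoints hνd (fun t ht => by simpa using hneg t ht)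
    (by simpa using le_neg.1 ha) (by simpa using le_neg.1 hb) t ht
  simp only [Pi.neg_apply] at this
  linarith

lemma mul_sub_le_of_deriv_mem_Icc (h : MorseOn f f' f'' d (Icc x y)) (hνd : 2 * ν ≤ d)
    (hxy : x ≤ y) (hband : ∀ t ∈ Icc x y, 0 ≤ f' t ∧ f' t ≤ ν) : d * (y - x) ≤ 2 * ν := by
  obtain rfl | hlt := hxy.eq_or_lt
  · linarith [(hband x (left_mem_Icc.2 le_rfl)).1, (hband x (left_mem_Icc.2 le_rfl)).2]
  obtain ⟨ξ, hξ, hslope⟩ := exists_hasDerivAt_eq_slope f' f'' hlt h.continuousOn_deriv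
    fun t ht => h.hasDerivAt_deriv t (Ioo_subset_Icc_self ht)
  have hξ' := Ioo_subset_Icc_self hξ
  have hcurv : d - ν ≤ |f'' ξ| := by
    linarith [h.le_abs_add_abs ξ hξ', abs_of_nonneg (hband ξ hξ').1, (hband ξ hξ').2]
  have hrise : |f'' ξ| * (y - x) ≤ ν := by
    rw [hslope, abs_div, abs_of_pos (sub_pos.2 hlt), div_mul_cancel₀ _ (sub_pos.2 hlt).ne',
      abs_sub_le_iff]
    constructor <;> linarith [hband x (left_mem_Icc.2 hxy), hband y (right_mem_Icc.2 hxy)]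
  nlinarith

lemma mul_sub_le_of_deriv_mem_Icc_neg (h : MorseOn f f' f'' d (Icc x y)) (hνd : 2 * ν ≤ d)
    (hxy : x ≤ y) (hband : ∀ t ∈ Icc x y, -ν ≤ f' t ∧ f' t ≤ 0) : d * (y - x) ≤ 2 * ν :=
  h.neg.mul_sub_le_of_deriv_mem_Icc hνd hxy fun t ht => by
    simp only [Pi.neg_apply]; constructor <;> linarith [hband t ht]

lemma mul_sub_le_of_mul_image_sub_le (h : MorseOn f f' f'' d (Icc c b)) (hν : 0 < ν)
    (hνd : ν < d / 2) (hpos : ∀ t ∈ Icc c b, 0 ≤ f' t) (hb : ν ≤ f' b) (hy : y ∈ Icc c b)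
    (hgap : d * (f y - f c) ≤ 2 * ν ^ 2) : d * (y - c) ≤ 9 / 2 * ν := by
  have hd : 0 < d := by linarith
  by_contra! hfar
  -- any width above `2ν/d` would do here
  set m := c + 5 * ν / (2 * d)
  have hdm : d * (m - c) = 5 / 2 * ν := by simp only [m, add_sub_cancel_left]; field_simp
  have hcm : c ≤ m := by nlinarith
  have hmy : m < y := by nlinarith
  obtain ⟨s, hs, hνs⟩ : ∃ s ∈ Icc c m, ν ≤ f' s := by
    by_contra! hlow
    have hcmb : Icc c m ⊆ Icc c b := Icc_subset_Icc_right (hmy.le.trans hy.2)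
    have := (h.mono hcmb).mul_sub_le_of_deriv_mem_Icc (by linarith) hcm
      fun t ht => ⟨hpos t (hcmb ht), (hlow t ht).le⟩
    linarith
  have hsb : Icc s b ⊆ Icc c b := Icc_subset_Icc_left hs.1
  have hsy : Icc s y ⊆ Icc s b := Icc_subset_Icc_right hy.2
  have hsteep := (h.mono hsb).le_deriv_of_le_deriv_endpoints (by linarith)
    (fun t ht => hpos t (hsb ht)) hνs hb
  have hrise : ν * (y - s) ≤ f y - f s :=
    mul_sub_le_sub_of_le_hasDerivAt (hs.2.trans hmy.le)
      (fun t ht => h.hasDerivAt t (hsb (hsy ht))) fun t ht => hsteep t (hsy ht)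
  have hcs : Icc c s ⊆ Icc c b := Icc_subset_Icc_right (hs.2.trans (hmy.le.trans hy.2))
  have hmono : 0 * (s - c) ≤ f s - f c :=
    mul_sub_le_sub_of_le_hasDerivAt hs.1 (fun t ht => h.hasDerivAt t (hcs ht))
      fun t ht => hpos t (hcs ht)
  have hys : d * (y - s) ≤ 2 * ν := by
    refine le_of_mul_le_mul_left ?_ hν
    nlinarith
  nlinarith [hs.2]

lemma mul_sub_le_of_valley_of_neg_lt_deriv (h : MorseOn f f' f'' d (Icc a b)) (hν : 0 < ν)
    (hνd : ν < d / 2) (hneg : ∀ t ∈ Icc a c, f' t ≤ 0) (hpos : ∀ t ∈ Icc c b, 0 ≤ f' t)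
    (ha : f' a ≤ -ν) (hb : ν ≤ f' b) (hx : x ∈ Icc a c) (hy : y ∈ Icc c b) (hxy : f x = f y)
    (hbad : -ν < f' x) : d * (y - x) ≤ 13 / 2 * ν := by
  have hd : 0 < d := by linarith
  have hxc : Icc x c ⊆ Icc a b := Icc_subset_Icc hx.1 (hy.1.trans hy.2)
  have hband : ∀ t ∈ Icc x c, -ν ≤ f' t ∧ f' t ≤ 0 := fun t ht =>
    ⟨le_of_not_gt fun hlt => hbad.not_ge <|
      (h.mono (Icc_subset_Icc_right (ht.2.trans (hy.1.trans hy.2)))).deriv_le_of_deriv_le_endpoints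
        (by linarith) (fun u hu => hneg u ⟨hu.1, hu.2.trans ht.2⟩) ha hlt.le x ⟨hx.1, ht.1⟩,
      hneg t ⟨hx.1.trans ht.1, ht.2⟩⟩
  have hnear : d * (c - x) ≤ 2 * ν :=
    (h.mono hxc).mul_sub_le_of_deriv_mem_Icc_neg (by linarith) hx.2 hband
  have hdrop : -ν * (c - x) ≤ f c - f x :=
    mul_sub_le_sub_of_le_hasDerivAt hx.2 (fun t ht => h.hasDerivAt t (hxc ht))
      fun t ht => (hband t ht).1
  have hfar := (h.mono (Icc_subset_Icc_left (hx.1.trans hx.2))).mul_sub_le_of_mul_image_sub_le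
    hν hνd hpos hb hy (by rw [← hxy]; nlinarith)
  linarith

lemma mul_sub_le_of_valley (h : MorseOn f f' f'' d (Icc a b)) (hν : 0 < ν)
    (hνd : ν < d / 2) (hneg : ∀ t ∈ Icc a c, f' t ≤ 0) (hpos : ∀ t ∈ Icc c b, 0 ≤ f' t)
    (ha : f' a ≤ -ν) (hb : ν ≤ f' b) (hx : x ∈ Icc a c) (hy : y ∈ Icc c b) (hxy : f x = f y)
    (hbad : -ν < f' x ∨ f' y < ν) : d * (y - x) ≤ 13 / 2 * ν := by
  rcases hbad with hbad | hbad
  · exact h.mul_sub_le_of_valley_of_neg_lt_deriv hν hνd hneg hpos ha hb hx hy hxy hbad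
  · have := h.comp_neg.mul_sub_le_of_valley_of_neg_lt_deriv (c := -c) (x := -y) (y := -x) hν hνd
      (fun t ht => neg_nonpos.2 (hpos (-t) (neg_mem_Icc_iff.2 ht)))
      (fun t ht => neg_nonneg.2 (hneg (-t) (neg_mem_Icc_iff.2 ht)))
      (by simpa using neg_le_neg hb) (by simpa using le_neg.1 ha)
      (neg_mem_Icc_iff.1 (by simpa using hy)) (neg_mem_Icc_iff.1 (by simpa using hx))
      (by simpa using hxy.symm) (by simpa using hbad)
    linarith

lemma left_endpoint_eq_of_neg_lt_deriv (h : MorseOn f f' f'' d (Icc am bm ∪ Icc ap bp))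
    (hd : 0 < d) (hneg : ∀ t ∈ Icc am bm, f' t ≤ 0) (hpos : ∀ t ∈ Icc ap bp, 0 ≤ f' t)
    (hbdry : ∀ t ∈ frontier (Icc am bm ∪ Icc ap bp), ν ≤ |f' t|) (hlem : am ≤ bm)
    (ham : -ν < f' am) : am = bp ∧ ν ≤ f' ap ∧ f' bm ≤ -ν := by
  have hI : IsClosed (Icc am bm ∪ Icc ap bp) := isClosed_Icc.union isClosed_Icc
  have ham' := hneg am (left_mem_Icc.2 hlem)
  obtain ⟨hap, hbp⟩ := lt_and_le_of_left_mem_interior <| hI.mem_interior_of_lt hbdry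
    (Or.inl (left_mem_Icc.2 hlem)) (by rw [abs_of_nonpos ham']; linarith)
  have hc : am = bp := hbp.eq_of_not_lt fun hlt =>
    ham'.not_gt ((h.mono subset_union_right).deriv_pos_of_mem_Ioo hd hpos ⟨hap, hlt⟩)
  refine ⟨hc, le_of_not_gt fun hlt => ?_, le_of_not_gt fun hlt => ?_⟩
  · have hap' := hpos ap (left_mem_Icc.2 (hap.le.trans hbp))
    have := lt_and_le_of_left_mem_interior (b := bp) (p := am) (q := bm) <|
      union_comm (Icc am bm) _ ▸ hI.mem_interior_of_lt hbdry
        (Or.inr (left_mem_Icc.2 (hap.le.trans hbp))) (by rwa [abs_of_nonneg hap'])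
    linarith
  · have hbm' := hneg bm (right_mem_Icc.2 hlem)
    have := le_and_lt_of_right_mem_interior <| hI.mem_interior_of_lt hbdry
      (Or.inl (right_mem_Icc.2 hlem)) (by rw [abs_of_nonpos hbm']; linarith)
    linarith

lemma right_endpoint_eq_of_neg_lt_deriv (h : MorseOn f f' f'' d (Icc am bm ∪ Icc ap bp))
    (hd : 0 < d) (hneg : ∀ t ∈ Icc am bm, f' t ≤ 0) (hpos : ∀ t ∈ Icc ap bp, 0 ≤ f' t)
    (hbdry : ∀ t ∈ frontier (Icc am bm ∪ Icc ap bp), ν ≤ |f' t|) (hlem : am ≤ bm)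
    (hbm : -ν < f' bm) : bm = ap ∧ f' am ≤ -ν ∧ ν ≤ f' bp := by
  have hI : IsClosed (Icc am bm ∪ Icc ap bp) := isClosed_Icc.union isClosed_Icc
  have hbm' := hneg bm (right_mem_Icc.2 hlem)
  obtain ⟨hap, hbp⟩ := le_and_lt_of_right_mem_interior <| hI.mem_interior_of_lt hbdry
    (Or.inl (right_mem_Icc.2 hlem)) (by rw [abs_of_nonpos hbm']; linarith)
  have hc : bm = ap := (hap.eq_of_not_lt fun hlt =>
    hbm'.not_gt ((h.mono subset_union_right).deriv_pos_of_mem_Ioo hd hpos ⟨hlt, hbp⟩)).symm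
  refine ⟨hc, le_of_not_gt fun hlt => ?_, le_of_not_gt fun hlt => ?_⟩
  · have ham' := hneg am (left_mem_Icc.2 hlem)
    have := lt_and_le_of_left_mem_interior <| hI.mem_interior_of_lt hbdry
      (Or.inl (left_mem_Icc.2 hlem)) (by rw [abs_of_nonpos ham']; linarith)
    linarith
  · have hbp' := hpos bp (right_mem_Icc.2 (hap.trans hbp.le))
    have := le_and_lt_of_right_mem_interior (a := ap) (p := am) (q := bm) <|
      union_comm (Icc am bm) _ ▸ hI.mem_interior_of_lt hbdry
        (Or.inr (right_mem_Icc.2 (hap.trans hbp.le))) (by rwa [abs_of_nonneg hbp'])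
    linarith

lemma le_abs_deriv_of_lt_mul_abs_sub {θm θp : ℝ}
    (h : MorseOn f f' f'' d (Icc am bm ∪ Icc ap bp)) (hν : 0 < ν) (hνd : ν < d / 2)
    (hneg : ∀ t ∈ Icc am bm, f' t ≤ 0) (hpos : ∀ t ∈ Icc ap bp, 0 ≤ f' t)
    (hbdry : ∀ t ∈ frontier (Icc am bm ∪ Icc ap bp), ν ≤ |f' t|)
    (hθm : θm ∈ Icc am bm) (hθp : θp ∈ Icc ap bp) (hf : f θm = f θp)
    (hsep : 13 / 2 * ν < d * |θp - θm|) : ν ≤ |f' θm| := by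
  have hd : 0 < d := by linarith
  have hlem : am ≤ bm := hθm.1.trans hθm.2
  by_contra! hbad
  have hθm' : -ν < f' θm := (abs_lt.1 hbad).1
  have hend : -ν < f' am ∨ -ν < f' bm := by
    by_contra! hend
    exact hθm'.not_ge <| (h.mono subset_union_left).deriv_le_of_deriv_le_endpoints (by linarith)
      hneg hend.1 hend.2 θm hθm
  rcases hend with ham | hbm
  · obtain ⟨rfl, hap, hbm⟩ := h.left_endpoint_eq_of_neg_lt_deriv hd hneg hpos hbdry hlem ham
    -- the branches meet at a peak of `f`, i.e. a valley of `-f`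
    have hpeak := h.neg.mono (t := Icc ap bm) (union_comm (Icc am bm) _ ▸ Icc_subset_Icc_union_Icc)
    have := hpeak.mul_sub_le_of_valley hν hνd (fun t ht => neg_nonpos.2 (hpos t ht))
      (fun t ht => neg_nonneg.2 (hneg t ht)) (neg_le_neg hap) (le_neg.1 hbm) hθp hθm
      (by simp [hf]) (Or.inr (by simp only [Pi.neg_apply]; linarith))
    rw [abs_sub_comm, abs_of_nonneg (by linarith [hθp.2, hθm.1])] at hsep
    linarith
  · obtain ⟨rfl, ham, hbp⟩ := h.right_endpoint_eq_of_neg_lt_deriv hd hneg hpos hbdry hlem hbm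
    have := (h.mono Icc_subset_Icc_union_Icc).mul_sub_le_of_valley hν hνd hneg hpos ham hbp
      hθm hθp hf (Or.inl hθm')
    rw [abs_of_nonneg (by linarith [hθp.1, hθm.2])] at hsep
    linarith

end MorseOn

theorem derivative_lower_bound_from_torus_norm_general
    (am bm ap bp d D ν : ℝ) (f f' f'' : ℝ → ℝ)
    (hder1 : ∀ θ ∈ Set.Icc am bm ∪ Set.Icc ap bp, HasDerivAt f (f' θ) θ)
    (hder2 : ∀ θ ∈ Set.Icc am bm ∪ Set.Icc ap bp, HasDerivAt f' (f'' θ) θ)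
    (hneg : ∀ θ ∈ Set.Icc am bm, f' θ ≤ 0)
    (hpos : ∀ θ ∈ Set.Icc ap bp, 0 ≤ f' θ)
    (hMorse : ∀ θ ∈ Set.Icc am bm ∪ Set.Icc ap bp,
      d ≤ |f' θ| + |f'' θ| ∧ |f' θ| + |f'' θ| ≤ D)
    (hν : 0 < ν) (hνd : ν < d / 2)
    (hbdry : ∀ θ ∈ frontier (Set.Icc am bm ∪ Set.Icc ap bp), ν ≤ |f' θ|)
    (Estar θm θp : ℝ)
    (hθm : θm ∈ Set.Icc am bm) (hfm : f θm = Estar)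
    (hθp : θp ∈ Set.Icc ap bp) (hfp : f θp = Estar)
    (hT : 7 * ν / d ≤ torusNorm (θp - θm)) :
    ν ≤ |f' θm| ∧ ν ≤ |f' θp| := by
  have h : MorseOn f f' f'' d (Icc am bm ∪ Icc ap bp) :=
    ⟨hder1, hder2, fun θ hθ => (hMorse θ hθ).1⟩
  have hsep : 13 / 2 * ν < d * |θp - θm| := by
    have := (div_le_iff₀' (by linarith : (0 : ℝ) < d)).1 (hT.trans (torusNorm_le_abs _))
    linarith
  have hf : f θm = f θp := hfm.trans hfp.symm
  refine ⟨h.le_abs_deriv_of_lt_mul_abs_sub hν hνd hneg hpos hbdry hθm hθp hf hsep, ?_⟩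
  have := (union_comm (Icc am bm) _ ▸ h.neg).le_abs_deriv_of_lt_mul_abs_sub hν hνd
    (fun t ht => neg_nonpos.2 (hpos t ht)) (fun t ht => neg_nonneg.2 (hneg t ht))
    (by simpa [union_comm] using hbdry) hθp hθm (by simp [hf]) (by rwa [abs_sub_comm])
  simpa using this

/-- Under Assumption (C): if the inverse-branch difference `T_f(E*) = f₊⁻¹(E*) − f₋⁻¹(E*)`
satisfies `‖T_f(E*)‖_𝕋 ≥ 7ν/d`, then `|f′| ≥ ν` at both preimages of `E*`. -/
theorem derivative_lower_bound_from_torus_norm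
    (am bm ap bp d D ν : ℝ) (f f' f'' : ℝ → ℝ)
    (hlem : am ≤ bm) (hlep : ap ≤ bp)
    (hdisj : Set.Ioo am bm ∩ Set.Ioo ap bp = ∅)
    (hd : 0 < d) (hdD : d ≤ D)
    (hder1 : ∀ θ ∈ Set.Icc am bm ∪ Set.Icc ap bp, HasDerivAt f (f' θ) θ)
    (hder2 : ∀ θ ∈ Set.Icc am bm ∪ Set.Icc ap bp, HasDerivAt f' (f'' θ) θ)
    (hcont2 : ContinuousOn f'' (Set.Icc am bm ∪ Set.Icc ap bp))
    (hneg : ∀ θ ∈ Set.Icc am bm, f' θ ≤ 0)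
    (hpos : ∀ θ ∈ Set.Icc ap bp, 0 ≤ f' θ)
    (hMorse : ∀ θ ∈ Set.Icc am bm ∪ Set.Icc ap bp,
      d ≤ |f' θ| + |f'' θ| ∧ |f' θ| + |f'' θ| ≤ D)
    (himg : f '' Set.Icc am bm = f '' Set.Icc ap bp)
    (hν : 0 < ν) (hνd : ν < d / 2)
    (hbdry : ∀ θ ∈ frontier (Set.Icc am bm ∪ Set.Icc ap bp), ν ≤ |f' θ|)
    (Estar θm θp : ℝ)
    (hEstar : Estar ∈ f '' Set.Icc am bm)
    (hθm : θm ∈ Set.Icc am bm) (hfm : f θm = Estar)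
    (hθp : θp ∈ Set.Icc ap bp) (hfp : f θp = Estar)
    (hT : 7 * ν / d ≤ torusNorm (θp - θm)) :
    ν ≤ |f' θm| ∧ ν ≤ |f' θp| :=
  derivative_lower_bound_from_torus_norm_general am bm ap bp d D ν f f' f'' hder1 hder2 hneg hpos
    hMorse hν hνd hbdry Estar θm θp hθm hfm hθp hfp hT
end

section
/- Let f satisfy Assumption (C) on I = I₋ ∪ I₊ with boundary-derivative constant ν, and suppose f has no critical point in I (so that |f′(θ)| ≥ ν for all θ ∈ I). Let I′₋ ⊆ I₋ and I′₊ ⊆ I₊ be compact intervals with disjoint interiors and let g : I′₋ ∪ I′₊ → ℝ also satisfy Assumption (C) (with its branches g₋ := g|_{I′₋}, g₊ := g|_{I′₊} having a common image J_g), and suppose |f(θ) − g(θ)| ≤ 2δ for all θ ∈ I′₋ ∪ I′₊, where δ > 0. Then for every E* ∈ J ∩ J_g one has |T_f(E*) − T_g(E*)| ≤ 4δ/ν. -/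
lemma aux_lip (a b ν c : ℝ) (f f' : ℝ → ℝ) (hν : 0 < ν)
    (hder : ∀ θ ∈ Set.Icc a b, HasDerivAt f (f' θ) θ)
    (hlb : ∀ θ ∈ Set.Icc a b, ν ≤ |f' θ|)
    {x y : ℝ} (hx : x ∈ Set.Icc a b) (hy : y ∈ Set.Icc a b)
    (hc : |f x - f y| ≤ c) : |x - y| ≤ c / ν := by
  have key : ∀ u v : ℝ, u ∈ Set.Icc a b → v ∈ Set.Icc a b → v < u →
      |f u - f v| ≤ c → u - v ≤ c / ν := by
    intro u v hu hv hlt hcc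
    have hsub : Set.Icc v u ⊆ Set.Icc a b :=
      Set.Icc_subset_Icc hv.1 hu.2
    have hcont : ContinuousOn f (Set.Icc v u) := fun t ht =>
      ((hder t (hsub ht)).continuousAt).continuousWithinAt
    have hderiv : ∀ t ∈ Set.Ioo v u, HasDerivAt f (f' t) t := fun t ht =>
      hder t (hsub (Set.mem_Icc_of_Ioo ht))
    obtain ⟨ξ, hξ, hslope⟩ := exists_hasDerivAt_eq_slope f f' hlt hcont hderiv
    have hξm : ξ ∈ Set.Icc a b := hsub (Set.mem_Icc_of_Ioo hξ)
    have h1 : ν ≤ |f' ξ| := hlb ξ hξm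
    have h2 : |f u - f v| = |f' ξ| * (u - v) := by
      rw [hslope, abs_div, abs_of_pos (by linarith : (0:ℝ) < u - v),
        div_mul_cancel₀ _ (by linarith : u - v ≠ 0)]
    have : ν * (u - v) ≤ c := by
      calc ν * (u - v) ≤ |f' ξ| * (u - v) := by nlinarith
        _ = |f u - f v| := h2.symm
        _ ≤ c := hcc
    rw [le_div_iff₀ hν]
    linarith
  rcases lt_trichotomy x y with h | h | h
  · rw [abs_sub_comm]
    rw [abs_of_pos (by linarith : (0:ℝ) < y - x)]
    exact key y x hy hx h (by rwa [abs_sub_comm])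
  · simp only [h, sub_self, abs_zero]
    exact div_nonneg (le_trans (abs_nonneg _) hc) hν.le
  · rw [abs_of_pos (by linarith : (0:ℝ) < x - y)]
    exact key x y hx hy h hc

/-- **Stability of the inverse-branch difference.** Let `f` satisfy Assumption (C) on
`I = I₋ ∪ I₊` with boundary-derivative constant `ν` and no critical point (so `|f′| ≥ ν` on `I`).
Let `g` satisfy Assumption (C) on subintervals `I′₋ ⊆ I₋`, `I′₊ ⊆ I₊`, and suppose
`|f − g| ≤ 2δ` on `I′₋ ∪ I′₊`. Then for every `E*` in both images,
`|T_f(E*) − T_g(E*)| ≤ 4δ/ν` (phrased via the branch preimages). -/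
theorem inverse_difference_stability
    (am bm ap bp d D ν : ℝ) (f f' f'' : ℝ → ℝ)
    (hlem : am ≤ bm) (hlep : ap ≤ bp)
    (hdisj : Set.Ioo am bm ∩ Set.Ioo ap bp = ∅)
    (hd : 0 < d) (hdD : d ≤ D)
    (hder1 : ∀ θ ∈ Set.Icc am bm ∪ Set.Icc ap bp, HasDerivAt f (f' θ) θ)
    (hder2 : ∀ θ ∈ Set.Icc am bm ∪ Set.Icc ap bp, HasDerivAt f' (f'' θ) θ)
    (hcont2 : ContinuousOn f'' (Set.Icc am bm ∪ Set.Icc ap bp))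
    (hneg : ∀ θ ∈ Set.Icc am bm, f' θ ≤ 0)
    (hpos : ∀ θ ∈ Set.Icc ap bp, 0 ≤ f' θ)
    (hMorse : ∀ θ ∈ Set.Icc am bm ∪ Set.Icc ap bp,
      d ≤ |f' θ| + |f'' θ| ∧ |f' θ| + |f'' θ| ≤ D)
    (himg : f '' Set.Icc am bm = f '' Set.Icc ap bp)
    (hν : 0 < ν) (hνd : ν < d / 2)
    (hbdry : ∀ θ ∈ frontier (Set.Icc am bm ∪ Set.Icc ap bp), ν ≤ |f' θ|)
    -- `f` has no critical point, so `|f′| ≥ ν` throughout `I`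
    (hnocrit : ∀ θ ∈ Set.Icc am bm ∪ Set.Icc ap bp, f' θ ≠ 0)
    (hν' : ∀ θ ∈ Set.Icc am bm ∪ Set.Icc ap bp, ν ≤ |f' θ|)
    -- `g` satisfies Assumption (C) on subintervals `I′₋ ⊆ I₋`, `I′₊ ⊆ I₊`
    (am' bm' ap' bp' dg Dg νg : ℝ) (g g' g'' : ℝ → ℝ)
    (hlem' : am' ≤ bm') (hlep' : ap' ≤ bp')
    (hsubm : Set.Icc am' bm' ⊆ Set.Icc am bm) (hsubp : Set.Icc ap' bp' ⊆ Set.Icc ap bp)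
    (hdisj' : Set.Ioo am' bm' ∩ Set.Ioo ap' bp' = ∅)
    (hdg : 0 < dg) (hdDg : dg ≤ Dg)
    (hgder1 : ∀ θ ∈ Set.Icc am' bm' ∪ Set.Icc ap' bp', HasDerivAt g (g' θ) θ)
    (hgder2 : ∀ θ ∈ Set.Icc am' bm' ∪ Set.Icc ap' bp', HasDerivAt g' (g'' θ) θ)
    (hgcont2 : ContinuousOn g'' (Set.Icc am' bm' ∪ Set.Icc ap' bp'))
    (hgneg : ∀ θ ∈ Set.Icc am' bm', g' θ ≤ 0)
    (hgpos : ∀ θ ∈ Set.Icc ap' bp', 0 ≤ g' θ)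
    (hgMorse : ∀ θ ∈ Set.Icc am' bm' ∪ Set.Icc ap' bp',
      dg ≤ |g' θ| + |g'' θ| ∧ |g' θ| + |g'' θ| ≤ Dg)
    (hgimg : g '' Set.Icc am' bm' = g '' Set.Icc ap' bp')
    (hνg : 0 < νg) (hνdg : νg < dg / 2)
    (hgbdry : ∀ θ ∈ frontier (Set.Icc am' bm' ∪ Set.Icc ap' bp'), νg ≤ |g' θ|)
    -- closeness
    (δ : ℝ) (hδ : 0 < δ)
    (hclose : ∀ θ ∈ Set.Icc am' bm' ∪ Set.Icc ap' bp', |f θ - g θ| ≤ 2 * δ) :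
    ∀ Estar : ℝ,
      ∀ θm ∈ Set.Icc am bm, ∀ θp ∈ Set.Icc ap bp, f θm = Estar → f θp = Estar →
      ∀ ηm ∈ Set.Icc am' bm', ∀ ηp ∈ Set.Icc ap' bp', g ηm = Estar → g ηp = Estar →
      |(θp - θm) - (ηp - ηm)| ≤ 4 * δ / ν := by
  intro Estar θm hθm θp hθp hfθm hfθp ηm hηm ηp hηp hgηm hgηp
  have hηm' : ηm ∈ Set.Icc am bm := hsubm hηm
  have hηp' : ηp ∈ Set.Icc ap bp := hsubp hηp
  have hcm : |f θm - f ηm| ≤ 2 * δ := by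
    rw [hfθm, ← hgηm, abs_sub_comm]; exact hclose ηm (Or.inl hηm)
  have hcp : |f θp - f ηp| ≤ 2 * δ := by
    rw [hfθp, ← hgηp, abs_sub_comm]; exact hclose ηp (Or.inr hηp)
  have h1 : |θm - ηm| ≤ 2 * δ / ν :=
    aux_lip am bm ν (2 * δ) f f' hν (fun θ hθ => hder1 θ (Or.inl hθ))
      (fun θ hθ => hν' θ (Or.inl hθ)) hθm hηm' hcm
  have h2 : |θp - ηp| ≤ 2 * δ / ν :=
    aux_lip ap bp ν (2 * δ) f f' hν (fun θ hθ => hder1 θ (Or.inr hθ))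
      (fun θ hθ => hν' θ (Or.inr hθ)) hθp hηp' hcp
  have h3 : |(θp - θm) - (ηp - ηm)| ≤ |θp - ηp| + |θm - ηm| := by
    have : (θp - θm) - (ηp - ηm) = (θp - ηp) - (θm - ηm) := by ring
    rw [this]; exact abs_sub _ _
  have h4 : 2 * δ / ν + 2 * δ / ν = 4 * δ / ν := by ring
  linarith
end
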